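/- As the integer g tends to infinity, the quantity (ζ(2g+1)/(2·π^{2g})) · (2g+1)·(2g+2) · (2g−1)!!/(2g−2)!! is asymptotically equivalent to 4·g^{5/2}/π^{2g+1/2}; that is, the ratio of the two expressions tends to 1. -/

import Mathlib

open Filter Real Topology Nat

/-- `ζ(s) = ∑_{k ≥ 1} 1/k^s`. -/
noncomputable def zetaVal (s : ℕ) : ℝ := ∑' k : ℕ, 1 / ((k : ℝ) + 1) ^ s

lemma summable_aux {s : ℕ} (hs : 2 ≤ s) : Summable (fun k : ℕ => 1 / ((k : ℝ) + 1) ^ s) := by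
  have h := (Real.summable_one_div_nat_pow (p := s)).2 hs
  have h2 := (summable_nat_add_iff 1).2 h
  simpa using h2

lemma summable_aux2 {s : ℕ} (hs : 2 ≤ s) : Summable (fun k : ℕ => 1 / ((k : ℝ) + 2) ^ s) := by
  have h := (summable_nat_add_iff 1).2 (summable_aux hs)
  simpa [add_assoc, one_add_one_eq_two] using h

lemma zeta_lower {s : ℕ} (hs : 2 ≤ s) : 1 ≤ zetaVal s := by
  have h := summable_aux hs
  have := Summable.le_tsum h 0 (fun i _ => by positivity)
  simpa [zetaVal] using this

lemma zeta_split {s : ℕ} (hs : 2 ≤ s) :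
    zetaVal s = 1 + ∑' k : ℕ, 1 / ((k : ℝ) + 2) ^ s := by
  have h := summable_aux hs
  have := Summable.tsum_eq_zero_add h
  simpa [zetaVal, add_assoc, one_add_one_eq_two] using this

lemma zeta_upper (m : ℕ) :
    zetaVal (2*m+3) ≤ 1 + (1/2:ℝ)^(2*m+1) * (∑' k : ℕ, 1 / ((k : ℝ) + 2) ^ 2) := by
  rw [zeta_split (by omega)]
  gcongr 1 + ?_
  rw [← tsum_mul_left]
  refine Summable.tsum_le_tsum (fun k => ?_) (summable_aux2 (by omega)) ((summable_aux2 le_rfl).mul_left _)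
  have hk : (2:ℝ) ≤ (k:ℝ) + 2 := by
    have : (0:ℝ) ≤ (k:ℝ) := Nat.cast_nonneg k
    linarith
  have hkpos : (0:ℝ) < (k:ℝ) + 2 := by positivity
  rw [show 2*m+3 = 2 + (2*m+1) by ring, pow_add, one_div, mul_inv, mul_comm,
    ← one_div, ← one_div, ← one_div_pow]
  have h12 : 1 / ((k:ℝ) + 2) ≤ 1/2 := by
    rw [div_le_div_iff₀ hkpos two_pos]; linarith
  gcongr

lemma zeta_tendsto : Tendsto (fun g : ℕ => zetaVal (2*g+1)) atTop (𝓝 1) := by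
  rw [← tendsto_add_atTop_iff_nat 1]
  have h0 : Tendsto (fun m : ℕ => ((1:ℝ)/2)^(2*m+1)) atTop (𝓝 0) := by
    refine (tendsto_pow_atTop_nhds_zero_of_lt_one (by norm_num) (by norm_num)).comp ?_
    exact tendsto_atTop_mono (fun n => by simp only [id_eq]; omega) tendsto_id
  have hup : Tendsto (fun m : ℕ => 1 + (1/2:ℝ)^(2*m+1) * (∑' k : ℕ, 1 / ((k : ℝ) + 2) ^ 2))
      atTop (𝓝 1) := by
    simpa using tendsto_const_nhds.add (h0.mul_const _)
  refine tendsto_of_tendsto_of_tendsto_of_le_of_le (f := fun m : ℕ => zetaVal (2*(m+1)+1))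
    tendsto_const_nhds hup (fun m => zeta_lower (by omega)) (fun m => ?_)
  simpa [show 2*(m+1)+1 = 2*m+3 by ring] using zeta_upper m

lemma cb_nat (n : ℕ) : Nat.centralBinom n * (n ! * n !) = (2*n)! := by
  have h := Nat.choose_mul_factorial_mul_factorial (show n ≤ 2*n by omega)
  rw [Nat.centralBinom]
  rw [show 2*n - n = n by omega] at h
  rw [← h]; ring

lemma cb_eq (m : ℕ) :
    Stirling.stirlingSeq (2*(m+1)) * Real.sqrt π / (Stirling.stirlingSeq (m+1))^2
      = (Nat.centralBinom (m+1) : ℝ) * Real.sqrt (π * (m+1 : ℕ)) / 4 ^ (m+1) := by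
  set n := m + 1 with hn
  have hn0 : (0:ℝ) < (n:ℝ) := by positivity
  have hcb : (Nat.centralBinom n : ℝ) = ((2*n)! : ℝ) / ((n ! : ℝ) * (n ! : ℝ)) := by
    rw [eq_div_iff (by positivity)]
    exact_mod_cast congrArg (Nat.cast (R := ℝ)) (cb_nat n)
  have h4 : Real.sqrt (2 * ((2*n : ℕ) : ℝ)) = 2 * Real.sqrt n := by
    rw [Nat.cast_mul, Nat.cast_ofNat]
    rw [show (2:ℝ)*(2*(n:ℝ)) = 2^2 * (n:ℝ) by ring, Real.sqrt_mul (by positivity),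
      Real.sqrt_sq (by norm_num)]
  have h2n : Real.sqrt (2 * (n : ℝ)) = Real.sqrt 2 * Real.sqrt n := Real.sqrt_mul (by norm_num) _
  have hpin : Real.sqrt (π * (n:ℕ)) = Real.sqrt π * Real.sqrt n := Real.sqrt_mul pi_pos.le _
  have hE : (((2*n : ℕ) : ℝ) / Real.exp 1) ^ (2*n) = 2^(2*n) * (((n:ℝ)/Real.exp 1)^n)^2 := by
    rw [Nat.cast_mul, Nat.cast_ofNat]
    rw [show (2*(n:ℝ))/Real.exp 1 = 2 * ((n:ℝ)/Real.exp 1) by ring, mul_pow, ← pow_mul]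
    ring
  rw [Stirling.stirlingSeq, Stirling.stirlingSeq, hcb, h4, h2n, hpin, hE]
  have hE0 : ((n:ℝ)/Real.exp 1)^n ≠ 0 := by positivity
  have hs0 : Real.sqrt (n:ℝ) ≠ 0 := by positivity
  have h20 : Real.sqrt 2 ≠ 0 := by positivity
  have hf0 : ((n ! : ℕ) : ℝ) ≠ 0 := by positivity
  have hsq2 : Real.sqrt 2 ^ 2 = 2 := Real.sq_sqrt (by norm_num)
  field_simp
  ring_nf
  rw [hsq2, show (2:ℝ)^(n*2) = 4^n by rw [mul_comm, pow_mul]; norm_num]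
  ring

lemma cb_tendsto : Tendsto (fun g : ℕ => (Nat.centralBinom g : ℝ) * Real.sqrt (π * g) / 4 ^ g)
    atTop (𝓝 1) := by
  have hπ : Real.sqrt π ≠ 0 := by positivity
  have h2 : Tendsto (fun g : ℕ => Stirling.stirlingSeq (2*g)) atTop (𝓝 (Real.sqrt π)) :=
    Stirling.tendsto_stirlingSeq_sqrt_pi.comp
      (tendsto_atTop_mono (fun n => by simp only [id_eq]; omega) tendsto_id)
  have h3 : Tendsto (fun g : ℕ =>
      Stirling.stirlingSeq (2*g) * Real.sqrt π / (Stirling.stirlingSeq g)^2) atTop (𝓝 1) := by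
    have h := (h2.mul_const (Real.sqrt π)).div
      (Stirling.tendsto_stirlingSeq_sqrt_pi.pow 2) (pow_ne_zero 2 hπ)
    have hval : Real.sqrt π * Real.sqrt π / (Real.sqrt π)^2 = 1 := by
      rw [← sq, div_self (pow_ne_zero 2 hπ)]
    rwa [hval] at h
  refine h3.congr' ?_
  filter_upwards [eventually_ge_atTop 1] with g hg
  obtain ⟨m, rfl⟩ := Nat.exists_eq_add_of_le hg
  simpa [add_comm 1 m] using cb_eq m


lemma middle_tendsto : Tendsto (fun g : ℕ => ((2*(g:ℝ)+1)*(2*(g:ℝ)+2)) / (4*(g:ℝ)^2))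
    atTop (𝓝 1) := by
  have h0 : Tendsto (fun g : ℕ => (1:ℝ)/(g:ℝ)) atTop (𝓝 0) := tendsto_one_div_atTop_nhds_zero_nat
  have h : Tendsto (fun g : ℕ => (1 + (1/2)*((1:ℝ)/g)) * (1 + (1:ℝ)/g)) atTop (𝓝 1) := by
    have := ((tendsto_const_nhds (x := (1:ℝ))).add ((h0.const_mul (1/2)))).mul
      ((tendsto_const_nhds (x := (1:ℝ))).add h0)
    simpa using this
  refine h.congr' ?_
  filter_upwards [eventually_ge_atTop 1] with g hg
  have hg0 : (0:ℝ) < (g:ℝ) := by exact_mod_cast hg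
  field_simp
  ring

/-- As `g → ∞`, the quantity `(ζ(2g+1)/(2·π^{2g})) · (2g+1)·(2g+2) · (2g−1)!!/(2g−2)!!`
is asymptotically equivalent to `4·g^{5/2}/π^{2g+1/2}`: the ratio tends to `1`. -/
theorem hyperelliptic_one_cylinder_proportion_asymptotics_odd :
    Tendsto (fun g : ℕ =>
        ((zetaVal (2 * g + 1) / (2 * Real.pi ^ (2 * g))) *
            ((2 * g + 1 : ℝ) * (2 * g + 2)) *
            ((Nat.doubleFactorial (2 * g - 1) : ℝ) /
              (Nat.doubleFactorial (2 * g - 2) : ℝ))) /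
          (4 * (g : ℝ) ^ ((5 : ℝ) / 2) / Real.pi ^ (2 * (g : ℝ) + 1 / 2)))
      atTop (nhds 1) := by
  have hprod : Tendsto (fun g : ℕ => zetaVal (2*g+1) *
      (((2*(g:ℝ)+1)*(2*(g:ℝ)+2)) / (4*(g:ℝ)^2)) *
      ((Nat.centralBinom g : ℝ) * Real.sqrt (π * g) / 4 ^ g)) atTop (𝓝 1) := by
    simpa using (zeta_tendsto.mul middle_tendsto).mul cb_tendsto
  refine hprod.congr' ?_
  filter_upwards [eventually_ge_atTop 1] with g hg
  obtain ⟨m, rfl⟩ := Nat.exists_eq_add_of_le hg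
  simp only [show 1+m = m+1 from add_comm 1 m]
  rw [show 2*(m+1)-1 = 2*m+1 from by omega, show 2*(m+1)-2 = 2*m from by omega]
  have hx : (0:ℝ) < ((m+1:ℕ):ℝ) := by positivity
  have hdf2 : ((Nat.doubleFactorial (2*m) : ℕ) : ℝ) = 2^m * (m ! : ℝ) := by
    exact_mod_cast congrArg (Nat.cast (R := ℝ)) (Nat.doubleFactorial_two_mul m)
  have hdf1 : ((Nat.doubleFactorial (2*m+1) : ℕ) : ℝ)
      = ((2*m+1)! : ℝ) / (2^m * (m ! : ℝ)) := by
    rw [eq_div_iff (by positivity), ← hdf2]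
    exact_mod_cast congrArg (Nat.cast (R := ℝ)) (Nat.factorial_eq_mul_doubleFactorial (2*m)).symm
  have hcb : ((Nat.centralBinom (m+1) : ℕ) : ℝ)
      = ((2*(m+1))! : ℝ) / (((m+1)! : ℝ) * ((m+1)! : ℝ)) := by
    rw [eq_div_iff (by positivity)]
    exact_mod_cast congrArg (Nat.cast (R := ℝ)) (cb_nat (m+1))
  have hpow : Real.pi ^ (2*((m+1:ℕ):ℝ) + 1/2) = Real.pi ^ (2*(m+1)) * Real.sqrt π := by
    rw [Real.rpow_add pi_pos, show 2*((m+1:ℕ):ℝ) = ((2*(m+1):ℕ):ℝ) from by push_cast; ring,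
      Real.rpow_natCast, Real.sqrt_eq_rpow]
  have h52 : ((m+1:ℕ):ℝ) ^ ((5:ℝ)/2) = ((m+1:ℕ):ℝ)^2 * Real.sqrt ((m+1:ℕ):ℝ) := by
    rw [show (5:ℝ)/2 = ((2:ℕ):ℝ) + 1/2 from by norm_num, Real.rpow_add hx,
      Real.rpow_natCast, Real.sqrt_eq_rpow]
  have hsqpi : Real.sqrt (π * ((m+1:ℕ):ℝ)) = Real.sqrt π * Real.sqrt ((m+1:ℕ):ℝ) :=
    Real.sqrt_mul pi_pos.le _
  have hfact1 : ((2*(m+1))! : ℝ) = (2*(m:ℝ)+2) * ((2*m+1)! : ℝ) := by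
    rw [show 2*(m+1) = (2*m+1)+1 from by ring, Nat.factorial_succ]
    push_cast; ring
  have hfact2 : (((m+1))! : ℝ) = ((m:ℝ)+1) * (m ! : ℝ) := by
    rw [Nat.factorial_succ]; push_cast; ring
  have hs2 : Real.sqrt ((m+1:ℕ):ℝ) ^ 2 = ((m+1:ℕ):ℝ) := Real.sq_sqrt hx.le
  have hp2 : Real.sqrt π ^ 2 = π := Real.sq_sqrt pi_pos.le
  have h4 : (4:ℝ)^(m+1) = 4 * (2^m * 2^m) := by
    rw [pow_succ, show (4:ℝ) = 2*2 from by norm_num, mul_pow]; ring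
  have hπ0 : Real.pi ^ (2*(m+1)) ≠ 0 := by positivity
  have hs0 : Real.sqrt ((m+1:ℕ):ℝ) ≠ 0 := by positivity
  have hsp0 : Real.sqrt π ≠ 0 := by positivity
  have hf0 : (m ! : ℝ) ≠ 0 := by positivity
  rw [hdf1, hdf2, hcb, hpow, h52, hsqpi, hfact1, hfact2, h4]
  push_cast
  have hs2' : Real.sqrt (1+(m:ℝ)) ^ 2 = 1+(m:ℝ) := Real.sq_sqrt (by positivity)
  field_simp
  ring_nf
  simp only [hs2']
  ring
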